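/- Let P be a subset of the edge set E of the Boolean lattice graph 𝒢 with |P| = |E| - (2^n - 1), and let A_m : ℝ^𝓑 → ℝ^P be the restriction of KB to the rows indexed by P. Then A_m is invertible if and only if the complement E \ P is a spanning tree of 𝒢. -/

import Mathlib

open Finset

/-- Möbius operator. -/
noncomputable def Kop (n : ℕ) (ρ : Finset (Fin n) → Fin n → ℝ)
    (D : Finset (Fin n)) (x : Fin n) : ℝ :=
  ∑ E ∈ univ.filter (fun E => D ⊆ E), (-1 : ℝ) ^ (E \ D).card * ρ E x

/-- The edge set of the Boolean lattice graph: all valid pairs `(D,x)`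
with `x ∈ D`; the edge `(D,x)` joins `D` and `D \ {x}`. -/
def Eall (n : ℕ) : Finset (Finset (Fin n) × Fin n) :=
  univ.filter (fun p => p.2 ∈ p.1)

/-- Adjacency in the graph whose edge set is `T`. -/
def adjVia (n : ℕ) (T : Finset (Finset (Fin n) × Fin n))
    (A B : Finset (Fin n)) : Prop :=
  ∃ p ∈ T, (A = p.1 ∧ B = p.1.erase p.2) ∨ (B = p.1 ∧ A = p.1.erase p.2)

/-- `T` is a spanning tree of the Boolean lattice graph: it connects all
`2^n` vertices and has exactly `2^n - 1` edges. -/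
def IsSpanningTree (n : ℕ) (T : Finset (Finset (Fin n) × Fin n)) : Prop :=
  (∀ A B : Finset (Fin n), Relation.ReflTransGen (adjVia n T) A B) ∧
    T.card = 2 ^ n - 1

/-- The reduced index set `𝓑`: pairs `(D,x)` with `x ∈ D` and `x ≠ max D`. -/
def BIdx (n : ℕ) : Type :=
  {q : Finset (Fin n) × Fin n // q.2 ∈ q.1 ∧ ∃ y ∈ q.1, q.2 < y}

/-- The embedding `B : ℝ^𝓑 → ℝ^N`. -/
noncomputable def Bembed (n : ℕ) (ξ : BIdx n → ℝ)
    (D : Finset (Fin n)) (x : Fin n) : ℝ :=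
  if hx : x ∈ D ∧ ∃ y ∈ D, x < y then ξ ⟨(D, x), hx⟩
  else if x ∈ D then
    -∑ y ∈ D.erase x,
      (if hy : y ∈ D ∧ ∃ z ∈ D, y < z then ξ ⟨(D, y), hy⟩ else 0)
  else 0

/-!
`KB` is an isomorphism from `ℝ^𝓑` onto the space of circulations of `𝒢`, the kernel of its
oriented incidence matrix: it is injective by Möbius inversion, it lands in the circulations
because every row of `B` sums to zero, and both spaces have dimension `|E| - 2^n + 1` because
`𝒢` is connected. So `A_m` fails to be injective exactly when a nonzero circulation vanishes on
`P`, that is, when the complement `T = E \ P` carries a nonzero circulation. For `|T| = 2^n - 1`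
this happens iff `T` is disconnected, by rank–nullity for the incidence matrix of `T` and for its
transpose, whose kernel consists of the functions constant on connected components. Finally
`|P| = |𝓑|`, so injectivity of `A_m` is bijectivity.
-/

open Matrix

section Incidence

variable {V ε : Type*} (K : Type*) [Field K] (head tail : ε → V)

def Linked (S : Finset ε) (a b : V) : Prop :=
  ∃ e ∈ S, (a = head e ∧ b = tail e) ∨ (b = head e ∧ a = tail e)

instance (S : Finset ε) : Std.Symm (Linked head tail S) :=
  ⟨fun _ _ ⟨e, he, h⟩ => ⟨e, he, h.symm⟩⟩

variable {head tail} in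
lemma apply_eq_of_reflTransGen {S : Finset ε} {β : Type*} {g : V → β}
    (hg : ∀ e ∈ S, g (head e) = g (tail e)) {a b : V}
    (hab : Relation.ReflTransGen (Linked head tail S) a b) : g a = g b := by
  have hstep : Linked head tail S ≤ Function.onFun Eq g := by
    rintro _ _ ⟨e, he, ⟨rfl, rfl⟩ | ⟨rfl, rfl⟩⟩
    exacts [hg e he, (hg e he).symm]
  simpa [Relation.reflTransGen_eq_self] using Relation.ReflTransGen.lift g hstep a b hab

variable [DecidableEq V]

def incidence (S : Finset ε) : Matrix V S K :=
  fun v e => (if head e = v then 1 else 0) - (if tail e = v then 1 else 0)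

variable {K head tail} {S : Finset ε}

lemma incidence_mulVec_apply [DecidableEq ε] (f : ε → K) (v : V) :
    (incidence K head tail S *ᵥ fun e => f e) v =
      ∑ e ∈ S with head e = v, f e - ∑ e ∈ S with tail e = v, f e := by
  simp only [mulVec, dotProduct, incidence, sub_mul, ite_mul, one_mul, zero_mul,
    Finset.sum_sub_distrib, Finset.sum_filter]
  rw [Finset.sum_coe_sort S (fun e => if head e = v then f e else 0),
    Finset.sum_coe_sort S (fun e => if tail e = v then f e else 0)]

lemma incidence_mulVec_of_subset [DecidableEq ε] {T : Finset ε} (hTS : T ⊆ S) (f : ε → K)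
    (hf : ∀ e ∈ S, e ∉ T → f e = 0) :
    (incidence K head tail S *ᵥ fun e => f e) = incidence K head tail T *ᵥ fun e => f e := by
  ext v
  simp only [incidence_mulVec_apply]
  congr 1 <;> exact (Finset.sum_subset (Finset.filter_subset_filter _ hTS)
    fun e he heT => hf e (Finset.mem_of_mem_filter e he) (fun h => heT (by simp_all))).symm

variable (K head tail S) in
lemma rank_incidence_add_finrank_ker :
    (incidence K head tail S).rank +
      Module.finrank K (LinearMap.ker (incidence K head tail S).mulVecLin) = S.card := by
  rw [rank, LinearMap.finrank_range_add_finrank_ker, Module.finrank_fintype_fun_eq_card,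
    Fintype.card_coe]

lemma injective_restrict_iff_ker_incidence_sdiff_eq_bot [DecidableEq ε]
    {U : Type*} [AddCommGroup U] [Module K U] {Φ : U →ₗ[K] S → K}
    (hΦ : Function.Injective Φ)
    (hrange : LinearMap.range Φ = LinearMap.ker (incidence K head tail S).mulVecLin)
    {P : Finset ε} (hP : P ⊆ S) :
    Function.Injective (LinearMap.funLeft K K (fun p : P => (⟨p, hP p.2⟩ : S)) ∘ₗ Φ) ↔
      LinearMap.ker (incidence K head tail (S \ P)).mulVecLin = ⊥ := by
  have hsub : S \ P ⊆ S := Finset.sdiff_subset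
  rw [← LinearMap.ker_eq_bot, LinearMap.ker_eq_bot', LinearMap.ker_eq_bot']
  constructor
  · intro hinj g hg
    let f : ε → K := fun e => if h : e ∈ S \ P then g ⟨e, h⟩ else 0
    have hfg : (fun e : ↥(S \ P) => f e) = g := funext fun e => dif_pos e.2
    have hf : (fun e : S => f e) ∈ LinearMap.range Φ := by
      rw [hrange, LinearMap.mem_ker, mulVecLin_apply,
        incidence_mulVec_of_subset hsub f fun e he heT => dif_neg heT, hfg]
      simpa using hg
    obtain ⟨u, hu⟩ := hf
    have hu0 : u = 0 := hinj u <| funext fun p => by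
      simp [LinearMap.funLeft, hu, f, p.2]
    rw [hu0, map_zero] at hu
    funext e
    rw [← hfg]
    exact (congrFun hu ⟨e, hsub e.2⟩).symm
  · intro hker u hu
    refine hΦ ((map_zero Φ).symm ▸ ?_)
    let f : ε → K := fun e => if h : e ∈ S then Φ u ⟨e, h⟩ else 0
    have hfΦ : (fun e : S => f e) = Φ u := funext fun e => dif_pos e.2
    have hfP : ∀ e ∈ S, e ∉ S \ P → f e = 0 := fun e he heT => by
      have hp : e ∈ P := by simpa [he] using heT
      simpa [LinearMap.funLeft, f, he] using congrFun hu ⟨e, hp⟩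
    have hf : (fun e : ↥(S \ P) => f e) = 0 := hker _ <| by
      rw [mulVecLin_apply, ← incidence_mulVec_of_subset hsub f hfP, hfΦ, ← mulVecLin_apply,
        ← LinearMap.mem_ker, ← hrange]
      exact LinearMap.mem_range_self Φ u
    rw [← hfΦ]
    funext e
    by_cases he : (e : ε) ∈ P
    · exact hfP e e.2 (fun h => (Finset.mem_sdiff.1 h).2 he)
    · exact congrFun hf ⟨e, Finset.mem_sdiff.2 ⟨e.2, he⟩⟩

variable [Fintype V]

lemma incidence_transpose_mulVec_apply (g : V → K) (e : S) :
    ((incidence K head tail S)ᵀ *ᵥ g) e = g (head e) - g (tail e) := by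
  simp [mulVec, dotProduct, incidence, sub_mul, Finset.sum_sub_distrib]

lemma mem_ker_incidence_transpose {g : V → K} :
    g ∈ LinearMap.ker (incidence K head tail S)ᵀ.mulVecLin ↔
      ∀ e ∈ S, g (head e) = g (tail e) := by
  simp only [LinearMap.mem_ker, mulVecLin_apply, funext_iff, incidence_transpose_mulVec_apply,
    Pi.zero_apply, sub_eq_zero, Subtype.forall]

lemma finrank_ker_incidence_transpose_of_connected [Nonempty V]
    (h : ∀ a b, Relation.ReflTransGen (Linked head tail S) a b) :
    Module.finrank K (LinearMap.ker (incidence K head tail S)ᵀ.mulVecLin) = 1 := by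
  obtain ⟨a⟩ := ‹Nonempty V›
  have hker : LinearMap.ker (incidence K head tail S)ᵀ.mulVecLin = K ∙ fun _ => 1 := by
    refine le_antisymm (fun g hg => ?_) ?_
    · rw [mem_ker_incidence_transpose] at hg
      exact Submodule.mem_span_singleton.2
        ⟨g a, funext fun b => by simpa using apply_eq_of_reflTransGen hg (h a b)⟩
    · rw [Submodule.span_singleton_le_iff_mem, mem_ker_incidence_transpose]
      exact fun _ _ => rfl
  rw [hker, finrank_span_singleton (Function.ne_iff.2 ⟨a, one_ne_zero⟩)]

lemma two_le_finrank_ker_incidence_transpose_of_not_connected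
    (h : ¬ ∀ a b, Relation.ReflTransGen (Linked head tail S) a b) :
    2 ≤ Module.finrank K (LinearMap.ker (incidence K head tail S)ᵀ.mulVecLin) := by
  classical
  push Not at h
  obtain ⟨a, b, hab⟩ := h
  let component : V → K :=
    fun c => if Relation.ReflTransGen (Linked head tail S) a c then 1 else 0
  have hcomponent : component ∈ LinearMap.ker (incidence K head tail S)ᵀ.mulVecLin := by
    refine mem_ker_incidence_transpose.2 fun e he => if_congr ?_ rfl rfl
    exact ⟨fun hae => hae.tail ⟨e, he, .inl ⟨rfl, rfl⟩⟩,
      fun hae => hae.tail ⟨e, he, .inr ⟨rfl, rfl⟩⟩⟩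
  have hli : LinearIndependent K ![fun _ => 1, component] := by
    refine LinearIndependent.pair_iff.2 fun s t hst => ?_
    have hb := congrFun hst b
    have ha := congrFun hst a
    simp only [Pi.add_apply, Pi.smul_apply, smul_eq_mul, mul_one, hab, ↓reduceIte, mul_zero,
      add_zero, Pi.zero_apply, mul_ite, component] at hb ha
    exact ⟨hb, by simpa [hb, Relation.ReflTransGen.refl] using ha⟩
  have hspan : Submodule.span K (Set.range ![fun _ => 1, component]) ≤
      LinearMap.ker (incidence K head tail S)ᵀ.mulVecLin := by
    rw [Submodule.span_le, Matrix.range_cons, Matrix.range_cons, Matrix.range_empty]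
    simp only [Set.union_empty, Set.union_singleton, Set.insert_subset_iff,
      Set.singleton_subset_iff]
    exact ⟨hcomponent, mem_ker_incidence_transpose.2 fun _ _ => rfl⟩
  simpa [finrank_span_eq_card hli] using Submodule.finrank_mono hspan

variable (K head tail S) in
lemma rank_incidence_add_finrank_ker_transpose :
    (incidence K head tail S).rank +
      Module.finrank K (LinearMap.ker (incidence K head tail S)ᵀ.mulVecLin) = Fintype.card V := by
  rw [← rank_transpose, rank, LinearMap.finrank_range_add_finrank_ker,
    Module.finrank_fintype_fun_eq_card]

lemma ker_incidence_eq_bot_iff_connected (hcard : S.card + 1 = Fintype.card V) :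
    LinearMap.ker (incidence K head tail S).mulVecLin = ⊥ ↔
      ∀ a b, Relation.ReflTransGen (Linked head tail S) a b := by
  have : Nonempty V := Fintype.card_pos_iff.1 (by omega)
  have h₁ := rank_incidence_add_finrank_ker K head tail S
  have h₂ := rank_incidence_add_finrank_ker_transpose K head tail S
  rw [← Submodule.finrank_eq_zero]
  constructor
  · intro h
    by_contra hconn
    have := two_le_finrank_ker_incidence_transpose_of_not_connected (K := K) hconn
    omega
  · intro hconn
    have := finrank_ker_incidence_transpose_of_connected (K := K) hconn
    omega

lemma finrank_ker_incidence_of_connected [Nonempty V]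
    (hconn : ∀ a b, Relation.ReflTransGen (Linked head tail S) a b) :
    Module.finrank K (LinearMap.ker (incidence K head tail S).mulVecLin) + Fintype.card V =
      S.card + 1 := by
  have h₁ := rank_incidence_add_finrank_ker K head tail S
  have h₂ := rank_incidence_add_finrank_ker_transpose K head tail S
  have := finrank_ker_incidence_transpose_of_connected (K := K) hconn
  omega

end Incidence

lemma sum_neg_one_pow_card_sdiff {α R : Type*} [Fintype α] [DecidableEq α] [Ring R]
    {D F : Finset α} (h : D ⊆ F) :
    ∑ E with D ⊆ E ∧ E ⊆ F, (-1 : R) ^ (F \ E).card = if F = D then 1 else 0 := by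
  have hreindex : ∑ E with D ⊆ E ∧ E ⊆ F, (-1 : R) ^ (F \ E).card =
      ∑ G ∈ (F \ D).powerset, (-1 : R) ^ G.card := by
    refine Finset.sum_nbij' (F \ ·) (F \ ·) ?_ ?_ ?_ ?_ fun _ _ => rfl <;>
      simp only [mem_filter, mem_univ, true_and, mem_powerset]
    · exact fun E hE => sdiff_subset_sdiff le_rfl hE.1
    · exact fun G hG =>
        ⟨subset_sdiff.2 ⟨h, disjoint_of_subset_right hG disjoint_sdiff_self_right⟩,
          sdiff_subset⟩
    · exact fun E hE => Finset.sdiff_sdiff_eq_self hE.2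
    · exact fun G hG => Finset.sdiff_sdiff_eq_self (hG.trans sdiff_subset)
  have hcast := congrArg (Int.cast : ℤ → R) (sum_powerset_neg_one_pow_card (x := F \ D))
  push_cast at hcast
  rw [hreindex, hcast]
  exact if_congr (sdiff_eq_empty_iff_subset.trans h.ge_iff_eq') rfl rfl

lemma sum_Kop_superset {n : ℕ} (ρ : Finset (Fin n) → Fin n → ℝ) (D : Finset (Fin n))
    (x : Fin n) :
    ∑ F with D ⊆ F, Kop n ρ F x = ρ D x := by
  unfold Kop
  rw [Finset.sum_comm' (t' := {E | D ⊆ E}) (s' := fun E => {F | D ⊆ F ∧ F ⊆ E})]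
  · rw [sum_congr rfl fun E hE => by
      rw [← sum_mul, sum_neg_one_pow_card_sdiff (mem_filter.1 hE).2]]
    simp
  · intro F E
    simp only [mem_filter, mem_univ, true_and]
    exact ⟨fun h => ⟨⟨h.1, h.2⟩, h.1.trans h.2⟩, fun h => ⟨h.1.1, h.1.2⟩⟩

lemma Bembed_add {n : ℕ} (ξ η : BIdx n → ℝ) :
    Bembed n (ξ + η) = Bembed n ξ + Bembed n η := by
  ext D x
  simp only [Bembed, Pi.add_apply]
  split_ifs
  · rfl
  · rw [← neg_add, ← sum_add_distrib]
    refine congrArg _ (sum_congr rfl fun y _ => ?_)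
    split_ifs
    exacts [rfl, (add_zero 0).symm]
  · exact (add_zero 0).symm

lemma Bembed_smul {n : ℕ} (c : ℝ) (ξ : BIdx n → ℝ) :
    Bembed n (c • ξ) = c • Bembed n ξ := by
  ext D x
  simp only [Bembed, Pi.smul_apply, smul_eq_mul]
  split_ifs
  · rfl
  · rw [mul_neg, mul_sum]
    refine congrArg _ (sum_congr rfl fun y _ => ?_)
    split_ifs
    exacts [rfl, (mul_zero c).symm]
  · exact (mul_zero c).symm

noncomputable def KB (n : ℕ) : (BIdx n → ℝ) →ₗ[ℝ] ({p // p ∈ Eall n} → ℝ) where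
  toFun ξ p := Kop n (Bembed n ξ) p.1.1 p.1.2
  map_add' ξ η := by
    ext p
    simp only [Kop, Bembed_add, Pi.add_apply, mul_add, sum_add_distrib]
  map_smul' c ξ := by
    ext p
    simp only [Kop, Bembed_smul, Pi.smul_apply, smul_eq_mul, mul_sum, RingHom.id_apply,
      mul_left_comm]

lemma KB_injective (n : ℕ) : Function.Injective (KB n) := by
  rw [← LinearMap.ker_eq_bot, LinearMap.ker_eq_bot']
  intro ξ hξ
  funext ⟨⟨D, x⟩, hq⟩
  calc ξ ⟨(D, x), hq⟩ = Bembed n ξ D x := by rw [Bembed, dif_pos hq]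
    _ = ∑ F with D ⊆ F, Kop n (Bembed n ξ) F x := (sum_Kop_superset _ D x).symm
    _ = 0 := sum_eq_zero fun F hF =>
      congrFun hξ ⟨(F, x), by simpa [Eall] using (mem_filter.1 hF).2 hq.1⟩

lemma sum_Bembed {n : ℕ} (ξ : BIdx n → ℝ) (E : Finset (Fin n)) :
    ∑ x ∈ E, Bembed n ξ E x = 0 := by
  rcases E.eq_empty_or_nonempty with rfl | hE
  · exact sum_empty
  have hmax : ¬(E.max' hE ∈ E ∧ ∃ y ∈ E, E.max' hE < y) := fun ⟨_, y, hy, hlt⟩ =>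
    (E.le_max' y hy).not_gt hlt
  have hlt : ∀ x ∈ E.erase (E.max' hE), x ∈ E ∧ ∃ y ∈ E, x < y := fun x hx =>
    ⟨mem_of_mem_erase hx, _, E.max'_mem hE,
      (E.le_max' x (mem_of_mem_erase hx)).lt_of_ne (ne_of_mem_erase hx)⟩
  rw [← add_sum_erase _ _ (E.max'_mem hE), Bembed, dif_neg hmax, if_pos (E.max'_mem hE),
    neg_add_eq_zero]
  exact sum_congr rfl fun x hx => by rw [Bembed, dif_pos (hlt x hx), dif_pos (hlt x hx)]

lemma neg_one_pow_card_sdiff_insert {α R : Type*} [DecidableEq α] [Ring R] {A E : Finset α}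
    {x : α} (hx : x ∈ E \ A) : (-1 : R) ^ (E \ insert x A).card = -(-1) ^ (E \ A).card := by
  rw [sdiff_insert, ← card_erase_add_one hx, pow_succ, mul_neg_one, neg_neg]

lemma sum_Kop_eq_sum_Kop_insert {n : ℕ} (ρ : Finset (Fin n) → Fin n → ℝ)
    (hρ : ∀ E, ∑ x ∈ E, ρ E x = 0) (A : Finset (Fin n)) :
    ∑ x ∈ A, Kop n ρ A x = ∑ x with x ∉ A, Kop n ρ (insert x A) x := by
  calc ∑ x ∈ A, Kop n ρ A x
      = ∑ E with A ⊆ E, (-1) ^ (E \ A).card * ∑ x ∈ A, ρ E x := by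
        simp only [Kop, mul_sum]
        exact sum_comm
    _ = ∑ E with A ⊆ E, ∑ x ∈ E \ A, (-1) ^ (E \ insert x A).card * ρ E x := by
        refine sum_congr rfl fun E hE => ?_
        have hsplit := sum_sdiff (f := ρ E) (mem_filter.1 hE).2
        rw [hρ E] at hsplit
        rw [eq_neg_of_add_eq_zero_right hsplit, mul_neg, mul_sum, ← sum_neg_distrib]
        exact sum_congr rfl fun x hx => by rw [neg_one_pow_card_sdiff_insert hx, neg_mul]
    _ = ∑ x with x ∉ A, Kop n ρ (insert x A) x := by
        unfold Kop
        refine sum_comm' fun E x => ?_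
        simp only [mem_filter, mem_univ, true_and, mem_sdiff, insert_subset_iff]
        tauto

def lowerEnd {n : ℕ} (p : Finset (Fin n) × Fin n) : Finset (Fin n) := p.1.erase p.2

@[simp] lemma mem_Eall {n : ℕ} {p : Finset (Fin n) × Fin n} : p ∈ Eall n ↔ p.2 ∈ p.1 := by
  simp [Eall]

lemma Eall_filter_fst_eq (n : ℕ) (A : Finset (Fin n)) :
    {p ∈ Eall n | p.1 = A} = A.map ⟨(A, ·), Prod.mk_right_injective A⟩ := by
  ext ⟨D, x⟩
  simp only [mem_filter, mem_Eall, mem_map, Function.Embedding.coeFn_mk, Prod.mk.injEq]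
  constructor
  · rintro ⟨hx, rfl⟩
    exact ⟨x, hx, rfl, rfl⟩
  · rintro ⟨x, hx, rfl, rfl⟩
    exact ⟨hx, rfl⟩

lemma Eall_filter_lowerEnd_eq (n : ℕ) (A : Finset (Fin n)) :
    {p ∈ Eall n | lowerEnd p = A} =
      ({x | x ∉ A} : Finset (Fin n)).map
        ⟨fun x => (insert x A, x), fun _ _ h => (Prod.ext_iff.1 h).2⟩ := by
  ext ⟨D, x⟩
  rw [mem_filter, mem_map]
  simp only [mem_Eall, mem_filter, mem_univ, true_and, lowerEnd]
  constructor
  · rintro ⟨hx, rfl⟩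
    exact ⟨x, notMem_erase x D, Prod.ext (insert_erase hx) rfl⟩
  · rintro ⟨y, hy, h⟩
    obtain ⟨rfl, rfl⟩ := Prod.ext_iff.1 h
    exact ⟨mem_insert_self y A, erase_insert hy⟩

lemma incidence_mulVec_KB {n : ℕ} (ξ : BIdx n → ℝ) :
    incidence ℝ Prod.fst lowerEnd (Eall n) *ᵥ KB n ξ = 0 := by
  ext A
  rw [show KB n ξ = fun p => Kop n (Bembed n ξ) p.1.1 p.1.2 from rfl,
    incidence_mulVec_apply (fun p : Finset (Fin n) × Fin n => Kop n (Bembed n ξ) p.1 p.2),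
    Eall_filter_fst_eq, Eall_filter_lowerEnd_eq, sum_map, sum_map]
  exact sub_eq_zero.2 (sum_Kop_eq_sum_Kop_insert _ (sum_Bembed ξ) A)

lemma card_Eall (n : ℕ) : (Eall n).card = n * 2 ^ (n - 1) := by
  rw [card_eq_sum_card_fiberwise (f := Prod.fst) (t := univ) fun _ _ => mem_univ _]
  simp_rw [Eall_filter_fst_eq, card_map]
  have := sum_powerset_apply_card (fun m => m) (x := (univ : Finset (Fin n)))
  rw [← powerset_univ, this, card_univ, Fintype.card_fin, ← Nat.sum_range_mul_choose]
  simp only [smul_eq_mul, mul_comm]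

instance (n : ℕ) : Fintype (BIdx n) :=
  inferInstanceAs (Fintype {q : Finset (Fin n) × Fin n // q.2 ∈ q.1 ∧ ∃ y ∈ q.1, q.2 < y})

lemma card_BIdx_add (n : ℕ) : Fintype.card (BIdx n) + (2 ^ n - 1) = (Eall n).card := by
  have hmax : #{p ∈ Eall n | ¬∃ y ∈ p.1, p.2 < y} = 2 ^ n - 1 := by
    rw [show 2 ^ n - 1 = #(univ.erase (∅ : Finset (Fin n))) by simp]
    refine card_bij (fun p _ => p.1) ?_ ?_ ?_
    · intro p hp
      simp only [mem_filter, mem_Eall] at hp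
      exact mem_erase.2 ⟨ne_empty_of_mem hp.1, mem_univ _⟩
    · rintro ⟨D, x⟩ hp ⟨D', y⟩ hq (rfl : D = D')
      simp only [mem_filter, mem_Eall, not_exists, not_and, not_lt] at hp hq
      exact Prod.ext rfl (le_antisymm (hq.2 x hp.1) (hp.2 y hq.1))
    · intro D hD
      have hne : D.Nonempty := nonempty_iff_ne_empty.2 (ne_of_mem_erase hD)
      refine ⟨(D, D.max' hne), ?_, rfl⟩
      simp only [mem_filter, mem_Eall, not_exists, not_and, not_lt]
      exact ⟨D.max'_mem hne, fun y hy => D.le_max' y hy⟩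
  have hnonmax : Fintype.card (BIdx n) = #{p ∈ Eall n | ∃ y ∈ p.1, p.2 < y} := by
    refine (Fintype.card_subtype _).trans (congrArg card ?_)
    ext p
    simp [Eall]
  rw [← hmax, hnonmax, card_filter_add_card_filter_not]

lemma reflTransGen_linked_Eall (n : ℕ) (A B : Finset (Fin n)) :
    Relation.ReflTransGen (Linked Prod.fst lowerEnd (Eall n)) A B := by
  have hdown : ∀ A : Finset (Fin n),
      Relation.ReflTransGen (Linked Prod.fst lowerEnd (Eall n)) A ∅ := by
    intro A
    induction A using Finset.strongInduction with
    | H A ih =>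
      obtain rfl | ⟨x, hx⟩ := A.eq_empty_or_nonempty
      · exact .refl
      · exact .head ⟨(A, x), mem_Eall.2 hx, .inl ⟨rfl, rfl⟩⟩ (ih _ (erase_ssubset hx))
  exact (hdown A).trans (Std.Symm.symm _ _ (hdown B))

lemma range_KB (n : ℕ) :
    LinearMap.range (KB n) =
      LinearMap.ker (incidence ℝ Prod.fst lowerEnd (Eall n)).mulVecLin := by
  refine Submodule.eq_of_le_of_finrank_eq ?_ ?_
  · rintro _ ⟨ξ, rfl⟩
    exact incidence_mulVec_KB ξ
  · have hker := finrank_ker_incidence_of_connected (K := ℝ) (reflTransGen_linked_Eall n)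
    have hB := card_BIdx_add n
    rw [Fintype.card_finset, Fintype.card_fin] at hker
    rw [LinearMap.finrank_range_of_inj (KB_injective n), Module.finrank_fintype_fun_eq_card]
    have := Nat.one_le_two_pow (n := n)
    omega

theorem Am_bijective_iff_spanning_tree_general (n : ℕ)
    (P : Finset (Finset (Fin n) × Fin n)) (hP : P ⊆ Eall n)
    (hcard : P.card = n * 2 ^ (n - 1) - (2 ^ n - 1)) :
    Function.Bijective
      (fun (ξ : BIdx n → ℝ) (p : {p // p ∈ P}) =>
        Kop n (Bembed n ξ) p.1.1 p.1.2) ↔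
      IsSpanningTree n (Eall n \ P) := by
  have hB := card_BIdx_add n
  have hE := card_Eall n
  have hT : (Eall n \ P).card + 1 = 2 ^ n := by
    have := Nat.one_le_two_pow (n := n)
    rw [card_sdiff_of_subset hP]
    omega
  have hdim : Module.finrank ℝ (BIdx n → ℝ) = Module.finrank ℝ (P → ℝ) := by
    simp only [Module.finrank_fintype_fun_eq_card, Fintype.card_coe]
    omega
  change Function.Bijective
    (LinearMap.funLeft ℝ ℝ (fun p : P => (⟨p, hP p.2⟩ : Eall n)) ∘ₗ KB n) ↔ _
  rw [Function.Bijective,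
    and_iff_left_of_imp (LinearMap.injective_iff_surjective_of_finrank_eq_finrank hdim).1,
    injective_restrict_iff_ker_incidence_sdiff_eq_bot (KB_injective n) (range_KB n) hP,
    ker_incidence_eq_bot_iff_connected (hT.trans (by simp)), IsSpanningTree]
  exact (and_iff_left (by omega)).symm

/-- The matrix `A_m`, the restriction of `KB` to the rows indexed by `P`, is
invertible iff the complement `E \ P` is a spanning tree of the Boolean
lattice graph. -/
theorem Am_bijective_iff_spanning_tree (n : ℕ) (hn : 0 < n)
    (P : Finset (Finset (Fin n) × Fin n)) (hP : P ⊆ Eall n)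
    (hcard : P.card = n * 2 ^ (n - 1) - (2 ^ n - 1)) :
    Function.Bijective
      (fun (ξ : BIdx n → ℝ) (p : {p // p ∈ P}) =>
        Kop n (Bembed n ξ) p.1.1 p.1.2) ↔
      IsSpanningTree n (Eall n \ P) :=
  Am_bijective_iff_spanning_tree_general n P hP hcard
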